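/- Let α ∈ (0,1). There is a constant c₁₄ = c₁₄(d) > 0 such that for every real r > r_2, with K = K(r), the event C¹_K(r^α) is contained in the event {|L_K| ≥ c₁₄ r^{αd}}; that is, for every γ ∈ C¹_K(r^α), the K-clump of the origin contains at least c₁₄ r^{αd} sites. -/

import Mathlib

open MeasureTheory ENNReal

noncomputable section

/-- Sites: the lattice `ℤ^d`. -/
abbrev Site (d : ℕ) := Fin d → ℤ

/-- Configurations: elements of `{0,1}^{ℤ^d}`, encoded with `Bool`. -/
abbrev Config (d : ℕ) := Site d → Bool

/-- The translation `θ^z` acting on configurations: `(θ^z γ)(x) = γ(x - z)`. -/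
def shiftCfg {d : ℕ} (z : Site d) (γ : Config d) : Config d := fun x => γ (x - z)

/-- `φ` is a matching on `γ`: an involutive bijection matching ones to zeros. -/
def IsMatching {d : ℕ} (γ : Config d) (φ : Site d → Site d) : Prop :=
  Function.Bijective φ ∧ (∀ x, φ (φ x) = x) ∧ ∀ x, γ (φ x) = !(γ x)

/-- `Φ` is a matching rule with respect to the measure `P`. -/
def IsMatchingRule {d : ℕ} (P : Measure (Config d)) (Φ : Config d → Site d → Site d) : Prop :=
  (∀ x : Site d, Measurable fun γ => Φ γ x) ∧ ∀ᵐ γ ∂P, IsMatching γ (Φ γ)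

/-- `Φ` is translation-equivariant with respect to `P`. -/
def IsEquivariant {d : ℕ} (P : Measure (Config d)) (Φ : Config d → Site d → Site d) : Prop :=
  ∀ z x : Site d, ∀ᵐ γ ∂P, Φ (shiftCfg z γ) (x + z) = Φ γ x + z

/-- `P` is the product measure with i.i.d. Bernoulli(1/2) coordinates, characterized by
its values on cylinder events. -/
def IsBernoulliHalfProduct {d : ℕ} (P : Measure (Config d)) : Prop :=
  IsProbabilityMeasure P ∧
    ∀ (s : Finset (Site d)) (f : Site d → Bool),
      P {γ | ∀ x ∈ s, γ x = f x} = (1 / 2 : ℝ≥0∞) ^ s.card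

/-- `Z_Φ(γ) = ‖Φ(γ, 0)‖`, the `ℓ^∞` distance from the origin to its partner. -/
def ZΦ {d : ℕ} (Φ : Config d → Site d → Site d) (γ : Config d) : ℝ := ‖Φ γ 0‖

/-- Embedding of the lattice in `ℝ^d`. -/
def toR {d : ℕ} (x : Site d) : Fin d → ℝ := fun i => (x i : ℝ)

/-- The first standard basis vector `e₁`. -/
def e1 (d : ℕ) : Site d := fun i => if (i : ℕ) = 0 then 1 else 0

/-- `x` is a `k`-seed for `γ`. -/
def IsSeed {d : ℕ} (γ : Config d) (k : ℕ) (x : Site d) : Prop :=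
  γ x = true ∧ ∀ n : ℕ, 1 ≤ n → n ≤ k - 1 → γ (x + (n : ℤ) • e1 d) = false

/-- `r_k = (2^k k²)^{1/d} + 1/2`. -/
def rr (d k : ℕ) : ℝ := ((2 : ℝ) ^ k * (k : ℝ) ^ 2) ^ ((d : ℝ)⁻¹) + 1 / 2

/-- The shift `s_k = ⌊100 r_k⌋ e₁`. -/
def ss (d k : ℕ) : Site d := ⌊(100 : ℝ) * rr d k⌋ • e1 d

/-- `W_k(γ)`: the union of all `k`-cutters. -/
def cutters {d : ℕ} (γ : Config d) (k : ℕ) : Set (Fin d → ℝ) :=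
  ⋃ x ∈ {x : Site d | IsSeed γ k (x - ss d k)}, {y : Fin d → ℝ | ‖y - toR x‖ = rr d k}

/-- The `k`-blob containing the point `p ∈ ℝ^d`: the connected component of `p` in the
complement of all `j`-cutters with `j > k`. -/
def blob {d : ℕ} (γ : Config d) (k : ℕ) (p : Fin d → ℝ) : Set (Fin d → ℝ) :=
  connectedComponentIn (⋃ j ∈ {j : ℕ | k < j}, cutters γ j)ᶜ p

/-- The `k`-clump of a site `x`: the lattice points of the `k`-blob containing `x`. -/
def clump {d : ℕ} (γ : Config d) (k : ℕ) (x : Site d) : Set (Site d) :=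
  {y : Site d | toR y ∈ blob γ k (toR x)}

/-- The event `E_k`: the cube `S(-s_k, r_k - 1)` contains a `k`-seed. -/
def Ek (d k : ℕ) : Set (Config d) :=
  {γ | ∃ y : Site d, IsSeed γ k y ∧ ‖toR y + toR (ss d k)‖ ≤ rr d k - 1}

/-- A `k`-seed lying in the annulus `S(-s_k, r_k + s) \ S(-s_k, r_k - s)`. -/
def SeedInAnnulus {d : ℕ} (γ : Config d) (k : ℕ) (s : ℝ) (y : Site d) : Prop :=
  IsSeed γ k y ∧ ‖toR y + toR (ss d k)‖ ≤ rr d k + s ∧ rr d k - s < ‖toR y + toR (ss d k)‖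

/-- The event `U_k(s)`: `S(-s_k, r_k + s) \ S(-s_k, r_k - s)` contains a `k`-seed. -/
def Uk (d : ℕ) (k : ℕ) (s : ℝ) : Set (Config d) :=
  {γ | ∃ y : Site d, SeedInAnnulus γ k s y}

/-- The event `C_k(s) = ∪_{j ≥ k} U_j(s)`. -/
def Ck (d : ℕ) (k : ℕ) (s : ℝ) : Set (Config d) :=
  {γ | ∃ j : ℕ, k ≤ j ∧ γ ∈ Uk d j s}

/-- `±1`-valued spin `2γ(x) - 1`. -/
def pm1 {d : ℕ} (γ : Config d) (y : Site d) : ℤ := if γ y then 1 else -1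

/-- `Φ` matches maximally within clumps: a.s. every clump is finite and the number of
sites of each `k`-clump `L` matched outside `L` equals `|Σ_{x ∈ L} (2γ(x) - 1)|`. -/
def MatchesMaximally {d : ℕ} (P : Measure (Config d))
    (Φ : Config d → Site d → Site d) : Prop :=
  ∀ᵐ γ ∂P, ∀ k : ℕ, 1 ≤ k → ∀ x : Site d,
    (clump γ k x).Finite ∧
      (({y ∈ clump γ k x | Φ γ y ∉ clump γ k x}.ncard : ℤ)
        = |∑ᶠ y ∈ clump γ k x, pm1 γ y|)


/-- The event `C¹_k(a)`: for every `j ≥ k` the annulus `A_j` contains at most one `j`-seed,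
and there is exactly one `j ≥ k` whose annulus `A_j` contains a `j`-seed. -/
def C1 (d k : ℕ) (a : ℝ) : Set (Config d) :=
  {γ | (∀ j : ℕ, k ≤ j → ∀ y y' : Site d,
          SeedInAnnulus γ j a y → SeedInAnnulus γ j a y' → y = y') ∧
       (∃! j : ℕ, k ≤ j ∧ ∃ y : Site d, SeedInAnnulus γ j a y)}

/-- The event `C²_k(a) = C_k(a) \ C¹_k(a)`. -/
def C2 (d k : ℕ) (a : ℝ) : Set (Config d) := Ck d k a \ C1 d k a

/-!
Write `ρ = r^α`. If `3ρ/2 > r_{K+1}`, then `r ≤ r_{K+2} ≤ (9/2) r_{K+1} < (27/4) r^α` bounds `r`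
by a constant depending only on `α`, and it suffices that the clump is nonempty: the origin lies
on no cutter, because `ℓ^∞` norms of lattice vectors are integers while no `r_j` is.

Otherwise a cutter of index `j > K` that meets the open cube of radius `ρ` about the origin has
its seed in the annulus `A_j`, so on `C¹_K(ρ)` there is at most one such cutter, and its radius
is at least `3ρ/2`. Going radially from the origin towards (or away from) its centre, according
to whether the origin lies inside or outside it, to a point `p` with `‖p‖ = ρ/2`, the segment
`[0, p]` together with the open cube of radius `ρ/2` about `p` avoids that cutter. This connected
set therefore lies in the `K`-blob of the origin, and the cube contains `⌈ρ/2⌉^d` lattice points.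
-/

section Lattice

variable {d : ℕ}

lemma toR_add (a b : Site d) : toR (a + b) = toR a + toR b := by
  funext i; simp [toR]

lemma toR_sub (a b : Site d) : toR (a - b) = toR a - toR b := by
  funext i; simp [toR]

lemma toR_zero : toR (0 : Site d) = 0 := by
  funext i; simp [toR]

lemma norm_toR (z : Site d) : ‖toR z‖ = (Finset.univ.sup fun i => (z i).natAbs : ℕ) := by
  rw [Pi.norm_def, ← NNReal.coe_natCast, Nat.cast_finsetSup]
  simp only [NNReal.natCast_natAbs]
  rfl

lemma le_encard_setOf_toR_mem_ball (p : Fin d → ℝ) {s : ℝ} {n : ℕ}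
    (hn : (n : ℝ) < 2 * s) : (n ^ d : ℕ∞) ≤ {z : Site d | toR z ∈ Metric.ball p s}.encard := by
  let box : Finset (Site d) :=
    Fintype.piFinset fun i => Finset.Icc (⌊p i - s⌋ + 1) (⌊p i - s⌋ + n)
  have hcard : box.card = n ^ d := by
    simp [box, Fintype.card_piFinset, Int.card_Icc]
  have hs : 0 < s := by linarith [(n.cast_nonneg : (0 : ℝ) ≤ n)]
  have hsub : (box : Set (Site d)) ⊆ {z | toR z ∈ Metric.ball p s} := by
    intro z hz
    rw [Finset.mem_coe, Fintype.mem_piFinset] at hz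
    rw [Set.mem_ofPred_eq, mem_ball_iff_norm, pi_norm_lt_iff hs]
    intro i
    have hlo : (⌊p i - s⌋ : ℝ) + 1 ≤ z i := by exact_mod_cast (Finset.mem_Icc.1 (hz i)).1
    have hhi : (z i : ℝ) ≤ ⌊p i - s⌋ + n := by exact_mod_cast (Finset.mem_Icc.1 (hz i)).2
    have := Int.floor_le (p i - s)
    have := Int.lt_floor_add_one (p i - s)
    rw [Pi.sub_apply, Real.norm_eq_abs, abs_lt]
    constructor <;> simp only [toR] <;> linarith
  calc (n ^ d : ℕ∞) = (box : Set (Site d)).encard := by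
        rw [Set.encard_coe_eq_coe_finsetCard, hcard]; norm_cast
    _ ≤ _ := Set.encard_le_encard hsub

end Lattice

section Radii

variable {d : ℕ}

lemma rr_monotone : Monotone (rr d) := fun j k hjk => by
  have hbase : (2 : ℝ) ^ j * (j : ℝ) ^ 2 ≤ (2 : ℝ) ^ k * (k : ℝ) ^ 2 := by
    have := Nat.mul_le_mul (Nat.pow_le_pow_right two_pos hjk) (Nat.pow_le_pow_left hjk 2)
    exact_mod_cast this
  unfold rr
  gcongr

lemma three_halves_le_rr {k : ℕ} (hk : 1 ≤ k) : 3 / 2 ≤ rr d k := by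
  have : 1 ≤ ((2 : ℝ) ^ k * (k : ℝ) ^ 2) ^ ((d : ℝ)⁻¹) :=
    Real.one_le_rpow (one_le_mul_of_one_le_of_one_le (one_le_pow₀ one_le_two)
      (one_le_pow₀ (by exact_mod_cast hk))) (by positivity)
  unfold rr; linarith

lemma rr_succ_le {k : ℕ} (hk : 2 ≤ k) : rr d (k + 1) ≤ 9 / 2 * rr d k := by
  set A : ℝ := (2 : ℝ) ^ k * (k : ℝ) ^ 2
  have hbase : (2 : ℝ) ^ (k + 1) * ((k + 1 : ℕ) : ℝ) ^ 2 ≤ 9 / 2 * A := by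
    have hk' : (2 : ℝ) ≤ k := by exact_mod_cast hk
    have : 2 * ((k : ℝ) + 1) ^ 2 ≤ 9 / 2 * (k : ℝ) ^ 2 := by nlinarith
    push_cast; rw [pow_succ]; nlinarith [pow_pos (two_pos (α := ℝ)) k]
  have hroot : (9 / 2 : ℝ) ^ ((d : ℝ)⁻¹) ≤ 9 / 2 :=
    Real.rpow_le_self_of_one_le (by norm_num) (Nat.cast_inv_le_one d)
  calc rr d (k + 1) ≤ (9 / 2 * A) ^ ((d : ℝ)⁻¹) + 1 / 2 := by unfold rr; gcongr
    _ = (9 / 2 : ℝ) ^ ((d : ℝ)⁻¹) * A ^ ((d : ℝ)⁻¹) + 1 / 2 := by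
      rw [Real.mul_rpow (by norm_num) (by positivity)]
    _ ≤ 9 / 2 * rr d k := by
      unfold rr; nlinarith [Real.rpow_nonneg (show 0 ≤ A by positivity) (d : ℝ)⁻¹]

lemma natCast_ne_rr (hd : 1 ≤ d) {k : ℕ} (hk : 1 ≤ k) (m : ℕ) : (m : ℝ) ≠ rr d k := by
  intro h
  have hroot : ((2 : ℝ) ^ k * (k : ℝ) ^ 2) ^ ((d : ℝ)⁻¹) = m - 1 / 2 := by
    unfold rr at h; linarith
  have hpow : (2 : ℝ) ^ (k + d) * (k : ℝ) ^ 2 = (2 * m - 1) ^ d := by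
    rw [show (2 * (m : ℝ) - 1) = 2 * (m - 1 / 2) by ring, mul_pow, ← hroot,
      Real.rpow_inv_natCast_pow (by positivity) (by omega), pow_add]
    ring
  have hint : (2 : ℤ) ^ (k + d) * (k : ℤ) ^ 2 = (2 * m - 1) ^ d := by exact_mod_cast hpow
  have heven : Even ((2 * (m : ℤ) - 1) ^ d) := by
    rw [← hint]; exact (Int.even_pow.2 ⟨even_two, by omega⟩).mul_right _
  have hodd : Odd ((2 * (m : ℤ) - 1) ^ d) := Odd.pow ⟨m - 1, by ring⟩
  exact Int.not_even_iff_odd.2 hodd heven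

end Radii

section Lollipop

variable {E : Type*} [NormedAddCommGroup E] [NormedSpace ℝ E]

lemma norm_smul_sub_self (a : ℝ) (X : E) : ‖a • X - X‖ = |a - 1| * ‖X‖ := by
  rw [← Real.norm_eq_abs, ← norm_smul, sub_smul, one_smul]

def lollipop (p : E) (s : ℝ) : Set E := segment ℝ 0 p ∪ Metric.ball p s

lemma isPreconnected_lollipop (p : E) {s : ℝ} (hs : 0 < s) : IsPreconnected (lollipop p s) :=
  (convex_segment 0 p).isPreconnected.union p (right_mem_segment ℝ 0 p)
    (Metric.mem_ball_self hs) (convex_ball p s).isPreconnected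

lemma zero_mem_lollipop (p : E) (s : ℝ) : (0 : E) ∈ lollipop p s :=
  Or.inl (left_mem_segment ℝ 0 p)

lemma lollipop_subset_ball {p : E} {s : ℝ} (hs : 0 < s) (hp : ‖p‖ ≤ s) :
    lollipop p s ⊆ Metric.ball 0 (2 * s) := by
  rintro q (hq | hq)
  · have hsub : segment ℝ 0 p ⊆ Metric.closedBall 0 s :=
      (convex_closedBall 0 s).segment_subset (Metric.mem_closedBall_self hs.le)
        (mem_closedBall_zero_iff.2 hp)
    exact Metric.closedBall_subset_ball (by linarith) (hsub hq)
  · exact Metric.ball_subset_ball' (by rw [dist_zero_right]; linarith) hq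

lemma lollipop_subset_closedBall {X : E} {s : ℝ} (hs : 0 < s) (hsX : s ≤ ‖X‖) :
    lollipop ((s / ‖X‖) • X) s ⊆ Metric.closedBall X ‖X‖ := by
  have hX : 0 < ‖X‖ := hs.trans_le hsX
  have hdist : dist ((s / ‖X‖) • X) X = ‖X‖ - s := by
    rw [dist_eq_norm, norm_smul_sub_self,
      abs_of_nonpos (by rw [sub_nonpos, div_le_one hX]; exact hsX)]
    field_simp; ring
  rintro q (hq | hq)
  · refine (convex_closedBall X ‖X‖).segment_subset ?_ ?_ hq
    · simp
    · rw [Metric.mem_closedBall, hdist]; linarith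
  · exact Metric.ball_subset_closedBall (Metric.ball_subset_ball' (by rw [hdist]; linarith) hq)

lemma lollipop_subset_compl_ball (X : E) {s : ℝ} (hs : 0 ≤ s) :
    lollipop ((-(s / ‖X‖)) • X) s ⊆ (Metric.ball X ‖X‖)ᶜ := by
  rcases eq_or_ne X 0 with rfl | hX
  · simp
  have hX' : 0 < ‖X‖ := norm_pos_iff.2 hX
  have hdist : ∀ t : ℝ, 0 ≤ t → ‖t • (-(s / ‖X‖)) • X - X‖ = ‖X‖ + t * s := by
    intro t ht
    rw [smul_smul, norm_smul_sub_self, abs_of_nonpos (by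
      have : 0 ≤ t * (s / ‖X‖) := by positivity
      linarith)]
    field_simp; ring
  rintro q (hq | hq) <;> rw [Set.mem_compl_iff, Metric.mem_ball, not_lt, dist_eq_norm]
  · rw [segment_eq_image] at hq
    obtain ⟨t, ⟨ht0, -⟩, rfl⟩ := hq
    simp only [smul_zero, zero_add]
    rw [hdist t ht0]
    nlinarith
  · have := norm_sub_norm_le ((-(s / ‖X‖)) • X - X) ((-(s / ‖X‖)) • X - q)
    have h1 := hdist 1 zero_le_one
    rw [one_smul] at h1
    rw [Metric.mem_ball, dist_eq_norm] at hq
    rw [_root_.sub_sub_sub_cancel_left, h1, norm_sub_rev] at this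
    linarith

lemma exists_lollipop_subset_compl_sphere {X : E} {R s : ℝ} (hs : 0 < s) (hsX : s ≤ ‖X‖)
    (hXR : ‖X‖ ≠ R) : ∃ p : E, ‖p‖ = s ∧ lollipop p s ⊆ (Metric.sphere X R)ᶜ := by
  have hX : ‖X‖ ≠ 0 := (hs.trans_le hsX).ne'
  have hnorm : ‖(s / ‖X‖) • X‖ = s := by
    rw [norm_smul, norm_div, norm_norm, div_mul_cancel₀ _ hX, Real.norm_of_nonneg hs.le]
  rcases hXR.lt_or_gt with hlt | hgt
  · refine ⟨(s / ‖X‖) • X, hnorm, fun q hq hqR => ?_⟩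
    have := lollipop_subset_closedBall hs hsX hq
    rw [Metric.mem_closedBall, Metric.mem_sphere.1 hqR] at this
    exact hlt.not_ge this
  · refine ⟨(-(s / ‖X‖)) • X, by rw [neg_smul, norm_neg, hnorm], fun q hq hqR => ?_⟩
    have := lollipop_subset_compl_ball X hs.le hq
    rw [Set.mem_compl_iff, Metric.mem_ball, Metric.mem_sphere.1 hqR] at this
    exact this hgt

end Lollipop

section Cutters

variable {d : ℕ} {γ : Config d}

lemma mem_cutters {j : ℕ} {q : Fin d → ℝ} :
    q ∈ cutters γ j ↔
      ∃ x : Site d, IsSeed γ j (x - ss d j) ∧ q ∈ Metric.sphere (toR x) (rr d j) := by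
  simp [cutters, mem_sphere_iff_norm]

lemma toR_notMem_cutters (hd : 1 ≤ d) {j : ℕ} (hj : 1 ≤ j) (z : Site d) :
    toR z ∉ cutters γ j := by
  intro hz
  obtain ⟨x, -, hx⟩ := mem_cutters.1 hz
  rw [mem_sphere_iff_norm, ← toR_sub, norm_toR] at hx
  exact natCast_ne_rr hd hj _ hx

lemma mem_clump_self (hd : 1 ≤ d) (k : ℕ) (x : Site d) : x ∈ clump γ k x := by
  refine mem_connectedComponentIn ?_
  simp only [Set.mem_compl_iff, Set.mem_iUnion, Set.mem_ofPred_eq, not_exists]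
  exact fun j hkj => toR_notMem_cutters hd (by omega) x

lemma seedInAnnulus_of_mem_sphere {j : ℕ} {a : ℝ} {x : Site d} {q : Fin d → ℝ}
    (hx : IsSeed γ j (x - ss d j)) (hq : q ∈ Metric.sphere (toR x) (rr d j)) (hqa : ‖q‖ < a) :
    SeedInAnnulus γ j a (x - ss d j) := by
  rw [mem_sphere_iff_norm] at hq
  have h1 := norm_sub_norm_le (toR x) q
  have h2 := norm_sub_le q (toR x)
  rw [norm_sub_rev] at h1
  refine ⟨hx, ?_, ?_⟩ <;> rw [toR_sub, sub_add_cancel] <;> linarith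

lemma C1.eq_of_mem_cutters {K j₀ j : ℕ} {a : ℝ} {y₀ : Site d} {q : Fin d → ℝ}
    (hγ : γ ∈ C1 d K a) (hj₀ : K ≤ j₀) (hy₀ : SeedInAnnulus γ j₀ a y₀) (hj : K ≤ j)
    (hq : q ∈ cutters γ j) (hqa : ‖q‖ < a) :
    j = j₀ ∧ q ∈ Metric.sphere (toR (y₀ + ss d j₀)) (rr d j₀) := by
  obtain ⟨x, hx, hqx⟩ := mem_cutters.1 hq
  have hann := seedInAnnulus_of_mem_sphere hx hqx hqa
  obtain rfl : j = j₀ := hγ.2.unique ⟨hj, _, hann⟩ ⟨hj₀, _, hy₀⟩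
  obtain rfl : x - ss d j = y₀ := hγ.1 j hj _ _ hann hy₀
  rw [sub_add_cancel]
  exact ⟨rfl, hqx⟩

end Cutters

section Clump

variable {d : ℕ} {γ : Config d}

lemma exists_lollipop_subset_compl_cutters (hd : 1 ≤ d) {K : ℕ} {ρ : ℝ}
    (hγ : γ ∈ C1 d K ρ) (hρ : 0 < ρ) (hKρ : 3 / 2 * ρ ≤ rr d (K + 1)) :
    ∃ p : Fin d → ℝ, ‖p‖ ≤ ρ / 2 ∧
      lollipop p (ρ / 2) ⊆ (⋃ j ∈ {j : ℕ | K < j}, cutters γ j)ᶜ := by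
  obtain ⟨j₀, ⟨hj₀, y₀, hy₀⟩, -⟩ := hγ.2
  set X := toR (y₀ + ss d j₀)
  suffices h : ∃ p : Fin d → ℝ, ‖p‖ ≤ ρ / 2 ∧
      (K < j₀ → lollipop p (ρ / 2) ⊆ (Metric.sphere X (rr d j₀))ᶜ) by
    obtain ⟨p, hp, hsphere⟩ := h
    refine ⟨p, hp, fun q hq hF => ?_⟩
    simp only [Set.mem_iUnion, Set.mem_ofPred_eq] at hF
    obtain ⟨j, hKj, hqj⟩ := hF
    have hqρ : ‖q‖ < ρ := by
      have := lollipop_subset_ball (half_pos hρ) hp hq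
      rwa [mem_ball_zero_iff, mul_div_cancel₀ _ two_ne_zero] at this
    obtain ⟨rfl, hqX⟩ := C1.eq_of_mem_cutters hγ hj₀ hy₀ hKj.le hqj hqρ
    exact hsphere hKj hq hqX
  by_cases hKj₀ : K < j₀
  · have hXR : ‖X‖ ≠ rr d j₀ := by
      rw [norm_toR]; exact natCast_ne_rr hd (by omega) _
    have hρX : ρ / 2 ≤ ‖X‖ := by
      have := hy₀.2.2
      rw [← toR_add] at this
      linarith [rr_monotone (d := d) (show K + 1 ≤ j₀ by omega)]
    obtain ⟨p, hp, hsub⟩ := exists_lollipop_subset_compl_sphere (half_pos hρ) hρX hXR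
    exact ⟨p, hp.le, fun _ => hsub⟩
  · exact ⟨0, by rw [norm_zero]; positivity, fun h => absurd h hKj₀⟩

lemma half_pow_le_ncard_clump (hd : 1 ≤ d) {K : ℕ} {ρ : ℝ} (hγ : γ ∈ C1 d K ρ) (hρ : 1 < ρ)
    (hKρ : 3 / 2 * ρ ≤ rr d (K + 1)) (hfin : (clump γ K 0).Finite) :
    (ρ / 2) ^ d ≤ (clump γ K 0).ncard := by
  obtain ⟨p, hp, hcompl⟩ := exists_lollipop_subset_compl_cutters hd hγ (by linarith) hKρ
  have hblob : lollipop p (ρ / 2) ⊆ blob γ K (toR 0) := by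
    rw [toR_zero]
    exact (isPreconnected_lollipop p (by linarith)).subset_connectedComponentIn
      (zero_mem_lollipop p _) hcompl
  have hball : {z : Site d | toR z ∈ Metric.ball p (ρ / 2)} ⊆ clump γ K 0 :=
    fun z hz => hblob (Or.inr hz)
  have hceil : (⌈ρ / 2⌉₊ : ℝ) < 2 * (ρ / 2) := Nat.ceil_lt_two_mul (by linarith)
  have hcount : ⌈ρ / 2⌉₊ ^ d ≤ (clump γ K 0).ncard := by
    have := (le_encard_setOf_toR_mem_ball p hceil).trans (Set.encard_le_encard hball)
    rw [← hfin.cast_ncard_eq] at this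
    exact_mod_cast this
  calc (ρ / 2) ^ d ≤ (⌈ρ / 2⌉₊ : ℝ) ^ d := by gcongr; exact Nat.le_ceil _
    _ ≤ _ := by exact_mod_cast hcount

lemma one_le_ncard_clump (hd : 1 ≤ d) {k : ℕ} {x : Site d} (hfin : (clump γ k x).Finite) :
    1 ≤ (clump γ k x).ncard :=
  (Set.ncard_pos hfin).2 ⟨x, mem_clump_self hd k x⟩

end Clump

lemma Real.lt_rpow_inv_one_sub_of_lt_mul_rpow {r C α : ℝ} (hr : 0 < r) (hC : 0 ≤ C) (hα : α < 1)
    (h : r < C * r ^ α) : r < C ^ (1 - α)⁻¹ := by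
  rw [Real.lt_rpow_inv_iff_of_pos hr.le hC (sub_pos.2 hα), Real.rpow_sub hr, Real.rpow_one,
    div_lt_iff₀ (Real.rpow_pos_of_pos hr α)]
  exact h

/-- On the event `C¹_K(r^α)` the `K`-clump of the origin contains at least `c₁₄ r^{αd}`
sites. -/
theorem statement19 (d : ℕ) (hd : 1 ≤ d) (α : ℝ) (hα : α ∈ Set.Ioo (0 : ℝ) 1) :
    ∃ c₁₄ : ℝ, 0 < c₁₄ ∧ ∀ r : ℝ, rr d 2 < r → ∀ K : ℕ, 1 ≤ K →
      rr d (K + 1) < r → r ≤ rr d (K + 2) →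
      ∀ γ : Config d, γ ∈ C1 d K (r ^ α) →
        (clump γ K 0).Infinite ∨
          c₁₄ * r ^ (α * (d : ℝ)) ≤ ((clump γ K 0).ncard : ℝ) := by
  obtain ⟨hα0, hα1⟩ := hα
  set B : ℝ := (27 / 4 : ℝ) ^ (1 - α)⁻¹
  have hB : 0 < B ^ (α * d) := by positivity
  refine ⟨min ((1 / 2) ^ d) (B ^ (α * d))⁻¹, by positivity, ?_⟩
  intro r hr2 K hK _ hrK γ hγ
  refine or_iff_not_imp_left.2 fun hinf => ?_
  have hfin := Set.not_infinite.1 hinf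
  have hr : 1 < r := by linarith [three_halves_le_rr (d := d) (k := 2) (by norm_num)]
  have hρ : 1 < r ^ α := Real.one_lt_rpow hr hα0
  have hpow : r ^ (α * d) = (r ^ α) ^ d := by
    rw [Real.rpow_mul (by linarith), Real.rpow_natCast]
  by_cases hKρ : 3 / 2 * r ^ α ≤ rr d (K + 1)
  · calc min ((1 / 2) ^ d) (B ^ (α * d))⁻¹ * r ^ (α * d) ≤ (1 / 2) ^ d * (r ^ α) ^ d := by
          rw [hpow]; gcongr; exact min_le_left _ _
      _ = (r ^ α / 2) ^ d := by rw [← mul_pow]; ring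
      _ ≤ _ := half_pow_le_ncard_clump hd hγ hρ hKρ hfin
  · have hrB : r < B := by
      refine Real.lt_rpow_inv_one_sub_of_lt_mul_rpow (by linarith) (by norm_num) hα1 ?_
      linarith [rr_succ_le (d := d) (k := K + 1) (by omega)]
    calc min ((1 / 2) ^ d) (B ^ (α * d))⁻¹ * r ^ (α * d) ≤ (B ^ (α * d))⁻¹ * B ^ (α * d) := by
          gcongr; exact min_le_right _ _
      _ = 1 := inv_mul_cancel₀ hB.ne'
      _ ≤ _ := by exact_mod_cast one_le_ncard_clump hd hfin

end
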